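/- Let X and Y be PBDs on point sets S and T, and f : S → T a Wilson morphism. Then the co-domain D = S \ Dom(f) is a subsystem of X, and for every y ∈ T, the set D ∪ f^{-1}(y) is a subsystem of X. Moreover, if B is a block of Y with f^{-1}(B) nonempty, then setting Z = f^{-1}(B), G = {f^{-1}(y) : y ∈ B ∩ f(S)}, and L₀ the set of blocks of X contained in Z meeting each class of G in at most one point, the triple (Z, G, L₀) is a group divisible design: every pair of distinct points of Z lies in exactly one group of G or exactly one block of L₀, but not both. -/

import Mathlib

/-!
`D` is a subsystem because the domain is open, and `D ∪ f⁻¹(y)` is the Wilson inverse image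
`f^{-w}({y})` of a subsystem. For the design on `Z = f⁻¹(B)`, take `x₁, x₂ ∈ Z` with images
`y₁, y₂`. If `y₁ = y₂`, the pair lies in one group, and no block of `L₀` can contain it.
If `y₁ ≠ y₂`, let `b` be the block of `X` through them. It lies in the subsystem `f^{-w}(B)`,
since a block of `Y` is a subsystem. It misses `D`: a point of `D` in `b` together with `x₁`
would force `b ⊆ D ∪ f⁻¹(y₁)`, whereas `x₂ ∉ D ∪ f⁻¹(y₁)`. The same argument shows that `b`
meets each fibre at most once. Hence `b ∈ L₀`, and it is the only such block.
-/
/-- A subsystem of a pairwise balanced design `(S, L)`. -/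
def Subsys {S : Type*} (L : Set (Set S)) (X : Set S) : Prop :=
  ∀ x ∈ X, ∀ y ∈ X, x ≠ y → ∀ B ∈ L, x ∈ B → y ∈ B → B ⊆ X

/-- An open set of a PBD: the complement of a subsystem. -/
def IsOpenSet {S : Type*} (L : Set (Set S)) (O : Set S) : Prop :=
  Subsys L Oᶜ

/-- The domain of a partial function. -/
def pDom {S T : Type*} (f : S → Option T) : Set S := {x | f x ≠ none}

/-- The image of a partial function. -/
def pIm {S T : Type*} (f : S → Option T) : Set T := {y | ∃ x, f x = some y}

/-- The (ordinary) inverse image of a set under a partial function. -/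
def pPre {S T : Type*} (f : S → Option T) (O : Set T) : Set S :=
  {x | ∃ y ∈ O, f x = some y}

/-- Wilson inverse image: ordinary inverse image together with the co-domain. -/
def pWinv {S T : Type*} (f : S → Option T) (B : Set T) : Set S :=
  {x | ∀ y, f x = some y → y ∈ B}

/-- Composition of partial functions: first `f`, then `g`. -/
def pComp {S T U : Type*} (g : T → Option U) (f : S → Option T) : S → Option U :=
  fun x => (f x).bind g

/-- Image of a set under a partial function. -/
def imOn {S T : Type*} (f : S → Option T) (B : Set S) : Set T :=
  {y | ∃ x ∈ B, f x = some y}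

/-- A Wilson morphism between PBDs: a continuous partial function, i.e. one with
open domain such that inverse images of open sets are open. -/
def Morphism {S T : Type*} (LS : Set (Set S)) (LT : Set (Set T))
    (f : S → Option T) : Prop :=
  IsOpenSet LS (pDom f) ∧ ∀ O : Set T, IsOpenSet LT O → IsOpenSet LS (pPre f O)

def fiberGroups {S T : Type*} (f : S → Option T) (B : Set T) : Set (Set S) :=
  {g | ∃ y, y ∈ B ∧ y ∈ pIm f ∧ g = {x | f x = some y}}

def fiberBlocks {S T : Type*} (LS : Set (Set S)) (f : S → Option T) (B : Set T) :
    Set (Set S) :=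
  {b | b ∈ LS ∧ b ⊆ pPre f B ∧ ∀ g ∈ fiberGroups f B, (b ∩ g).ncard ≤ 1}

def WilsonContinuous {S T : Type*} (LS : Set (Set S)) (LT : Set (Set T))
    (f : S → Option T) : Prop :=
  ∀ F : Set T, Subsys LT F → Subsys LS (pWinv f F)

section

variable {S T : Type*} {LS : Set (Set S)} {LT : Set (Set T)} {f : S → Option T}

theorem subsys_singleton (L : Set (Set T)) (y : T) : Subsys L {y} :=
  fun _ ha _ hb hab => absurd (ha.trans hb.symm) hab

theorem subsys_of_mem {B : Set T}
    (hp : ∀ x y : T, x ≠ y → ∃! B, B ∈ LT ∧ x ∈ B ∧ y ∈ B) (hB : B ∈ LT) : Subsys LT B :=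
  fun a ha b hb hab _ hB' haB' hbB' =>
    ((hp a b hab).unique ⟨hB', haB', hbB'⟩ ⟨hB, ha, hb⟩).subset

theorem mem_compl_pDom_union_fiber {x : S} {y : T} :
    x ∈ (pDom f)ᶜ ∪ {x | f x = some y} ↔ f x = none ∨ f x = some y := by
  simp [pDom]

theorem pWinv_singleton (y : T) : pWinv f {y} = (pDom f)ᶜ ∪ {x | f x = some y} := by
  ext x
  rw [mem_compl_pDom_union_fiber]
  cases h : f x <;> simp [pWinv, h, eq_comm]

theorem pPre_subset_pWinv (B : Set T) : pPre f B ⊆ pWinv f B := by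
  rintro x ⟨y, hy, hfx⟩ y' hfx'
  rwa [← Option.some_inj.mp (hfx.symm.trans hfx')]

theorem pDom_inter_pWinv_subset_pPre (B : Set T) : pDom f ∩ pWinv f B ⊆ pPre f B := by
  rintro x ⟨hdom, hW⟩
  obtain ⟨y, hfx⟩ := Option.ne_none_iff_exists'.mp hdom
  exact ⟨y, hW y hfx, hfx⟩

theorem eq_of_mem_fiberGroups {B : Set T} {g : Set S} {x : S} {y : T}
    (hg : g ∈ fiberGroups f B) (hx : x ∈ g) (hfx : f x = some y) : g = {x | f x = some y} := by
  obtain ⟨y', -, -, rfl⟩ := hg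
  rw [Option.some_inj.mp (hfx.symm.trans hx)]

theorem existsUnique_mem_fiberGroups {B : Set T} {z : S} (hz : z ∈ pPre f B) :
    ∃! g, g ∈ fiberGroups f B ∧ z ∈ g := by
  obtain ⟨y, hy, hfz⟩ := hz
  exact ⟨{x | f x = some y}, ⟨⟨y, hy, ⟨z, hfz⟩, rfl⟩, hfz⟩,
    fun g ⟨hg, hzg⟩ => eq_of_mem_fiberGroups hg hzg hfz⟩

-- `ncard` of an infinite set is `0`, so without `Finite S` a block of `fiberBlocks` could
-- meet a group in infinitely many points.
theorem pair_in_group_of_eq [Finite S] {B : Set T} {x₁ x₂ : S} {y : T} (hx : x₁ ≠ x₂)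
    (hy : y ∈ B) (h₁ : f x₁ = some y) (h₂ : f x₂ = some y) :
    (∃! g, g ∈ fiberGroups f B ∧ x₁ ∈ g ∧ x₂ ∈ g) ∧
      ¬∃ b ∈ fiberBlocks LS f B, x₁ ∈ b ∧ x₂ ∈ b := by
  have hg : {x | f x = some y} ∈ fiberGroups f B := ⟨y, hy, ⟨x₁, h₁⟩, rfl⟩
  refine ⟨⟨_, ⟨hg, h₁, h₂⟩, fun g ⟨hg', hx₁, _⟩ => eq_of_mem_fiberGroups hg' hx₁ h₁⟩, ?_⟩
  rintro ⟨b, ⟨-, -, hmeet⟩, hb₁, hb₂⟩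
  exact hx ((Set.ncard_le_one_iff).mp (hmeet _ hg) ⟨hb₁, h₁⟩ ⟨hb₂, h₂⟩)

theorem subsys_compl_pDom_union_fiber (hW : WilsonContinuous LS LT f) (y : T) :
    Subsys LS ((pDom f)ᶜ ∪ {x | f x = some y}) :=
  pWinv_singleton (f := f) y ▸ hW _ (subsys_singleton LT y)

theorem eq_of_mem_block_meeting_twice (hW : WilsonContinuous LS LT f)
    {b : Set S} (hb : b ∈ LS) {u v x : S} {y y' : T}
    (hu : u ∈ b) (hv : v ∈ b) (huv : u ≠ v) (hu' : f u = none ∨ f u = some y)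
    (hv' : f v = some y) (hx : x ∈ b) (hfx : f x = some y') : y' = y := by
  have hsub := subsys_compl_pDom_union_fiber hW y u (mem_compl_pDom_union_fiber.mpr hu')
    v (mem_compl_pDom_union_fiber.mpr (Or.inr hv')) huv b hb hu hv
  rcases mem_compl_pDom_union_fiber.mp (hsub hx) with h | h
  · simp [hfx] at h
  · exact Option.some_inj.mp (hfx.symm.trans h)

theorem block_subset_pDom (hW : WilsonContinuous LS LT f)
    {b : Set S} (hb : b ∈ LS) {x₁ x₂ : S} {y₁ y₂ : T}
    (hx₁ : x₁ ∈ b) (hx₂ : x₂ ∈ b) (h₁ : f x₁ = some y₁) (h₂ : f x₂ = some y₂)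
    (hy : y₁ ≠ y₂) : b ⊆ pDom f := by
  intro z hz hfz
  have hzx : z ≠ x₁ := by rintro rfl; simp [hfz] at h₁
  exact hy (eq_of_mem_block_meeting_twice hW hb hz hx₁ hzx (Or.inl hfz) h₁ hx₂ h₂).symm

theorem ncard_inter_fiber_le_one (hW : WilsonContinuous LS LT f)
    {b : Set S} (hb : b ∈ LS) {x₁ x₂ : S} {y₁ y₂ : T}
    (hx₁ : x₁ ∈ b) (hx₂ : x₂ ∈ b) (h₁ : f x₁ = some y₁) (h₂ : f x₂ = some y₂)
    (hy : y₁ ≠ y₂) (y : T) : (b ∩ {x | f x = some y}).ncard ≤ 1 := by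
  have hsub : (b ∩ {x | f x = some y}).Subsingleton := by
    rintro u ⟨hu, hfu⟩ v ⟨hv, hfv⟩
    by_contra huv
    have e₁ := eq_of_mem_block_meeting_twice hW hb hu hv huv (Or.inr hfu) hfv hx₁ h₁
    have e₂ := eq_of_mem_block_meeting_twice hW hb hu hv huv (Or.inr hfu) hfv hx₂ h₂
    exact hy (e₁.trans e₂.symm)
  exact (Set.ncard_le_one_iff hsub.finite).mpr fun hu hv => hsub hu hv

theorem pair_in_block_of_ne (hW : WilsonContinuous LS LT f)
    {B : Set T} (hB : Subsys LT B) {x₁ x₂ : S} {y₁ y₂ : T}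
    (hpS : ∀ x y : S, x ≠ y → ∃! B, B ∈ LS ∧ x ∈ B ∧ y ∈ B)
    (hy₁ : y₁ ∈ B) (hy₂ : y₂ ∈ B) (h₁ : f x₁ = some y₁) (h₂ : f x₂ = some y₂)
    (hy : y₁ ≠ y₂) :
    (∃! b, b ∈ fiberBlocks LS f B ∧ x₁ ∈ b ∧ x₂ ∈ b) ∧
      ¬∃ g ∈ fiberGroups f B, x₁ ∈ g ∧ x₂ ∈ g := by
  have hx : x₁ ≠ x₂ := by rintro rfl; exact hy (Option.some_inj.mp (h₁.symm.trans h₂))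
  obtain ⟨b, ⟨hb, hx₁, hx₂⟩, huniq⟩ := hpS x₁ x₂ hx
  have hbW : b ⊆ pWinv f B := hW B hB x₁ (pPre_subset_pWinv B ⟨y₁, hy₁, h₁⟩)
    x₂ (pPre_subset_pWinv B ⟨y₂, hy₂, h₂⟩) hx b hb hx₁ hx₂
  have hbZ : b ⊆ pPre f B := fun z hz =>
    pDom_inter_pWinv_subset_pPre B ⟨block_subset_pDom hW hb hx₁ hx₂ h₁ h₂ hy hz, hbW hz⟩
  have hmeet : ∀ g ∈ fiberGroups f B, (b ∩ g).ncard ≤ 1 := by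
    rintro g ⟨y, -, -, rfl⟩
    exact ncard_inter_fiber_le_one hW hb hx₁ hx₂ h₁ h₂ hy y
  refine ⟨⟨b, ⟨⟨hb, hbZ, hmeet⟩, hx₁, hx₂⟩, fun b' ⟨⟨hb', _, _⟩, h₁', h₂'⟩ =>
    huniq b' ⟨hb', h₁', h₂'⟩⟩, ?_⟩
  rintro ⟨g, ⟨y, -, -, rfl⟩, hg₁, hg₂⟩
  exact hy (Option.some_inj.mp (h₁.symm.trans hg₁) |>.trans
    (Option.some_inj.mp (h₂.symm.trans hg₂)).symm)

end

theorem stmt13_general {S T : Type*} [Fintype S]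
    (LS : Set (Set S)) (LT : Set (Set T))
    (hpS : ∀ x y : S, x ≠ y → ∃! B, B ∈ LS ∧ x ∈ B ∧ y ∈ B)
    (hpT : ∀ x y : T, x ≠ y → ∃! B, B ∈ LT ∧ x ∈ B ∧ y ∈ B)
    (f : S → Option T)
    (hf : IsOpenSet LS (pDom f) ∧
      ∀ F : Set T, Subsys LT F → Subsys LS (pWinv f F)) :
    -- the co-domain is a subsystem,
    Subsys LS (pDom f)ᶜ ∧
    -- so is D ∪ f⁻¹(y) for every y,
    (∀ y : T, Subsys LS ((pDom f)ᶜ ∪ {x | f x = some y})) ∧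
    -- and each nonempty fibre of a block is a group divisible design:
    (∀ B ∈ LT, (pPre f B).Nonempty →
      let Z : Set S := pPre f B
      let G : Set (Set S) :=
        {g | ∃ y, y ∈ B ∧ y ∈ pIm f ∧ g = {x | f x = some y}}
      let L₀ : Set (Set S) :=
        {b | b ∈ LS ∧ b ⊆ Z ∧ ∀ g ∈ G, (b ∩ g).ncard ≤ 1}
      -- the groups partition Z,
      (∀ z ∈ Z, ∃! g, g ∈ G ∧ z ∈ g) ∧
      -- and every pair of distinct points of Z lies in exactly one group or
      -- exactly one block of L₀, but not both.
      ∀ x₁ ∈ Z, ∀ x₂ ∈ Z, x₁ ≠ x₂ →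
        ((∃! g, g ∈ G ∧ x₁ ∈ g ∧ x₂ ∈ g) ∧ ¬∃ b ∈ L₀, x₁ ∈ b ∧ x₂ ∈ b) ∨
        ((∃! b, b ∈ L₀ ∧ x₁ ∈ b ∧ x₂ ∈ b) ∧ ¬∃ g ∈ G, x₁ ∈ g ∧ x₂ ∈ g)) := by
  obtain ⟨hopen, hW⟩ := hf
  refine ⟨hopen, subsys_compl_pDom_union_fiber hW, fun B hB _ => ?_⟩
  refine ⟨fun z hz => existsUnique_mem_fiberGroups hz, ?_⟩
  rintro x₁ ⟨y₁, hy₁, h₁⟩ x₂ ⟨y₂, hy₂, h₂⟩ hx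
  rcases eq_or_ne y₁ y₂ with rfl | hy
  · exact Or.inl (pair_in_group_of_eq hx hy₁ h₁ h₂)
  · exact Or.inr (pair_in_block_of_ne hW (subsys_of_mem hpT hB) hpS hy₁ hy₂ h₁ h₂ hy)

theorem stmt13 {S T : Type*} [Fintype S] [Fintype T]
    (LS : Set (Set S)) (LT : Set (Set T))
    (hbS : ∀ B ∈ LS, 2 ≤ B.ncard)
    (hpS : ∀ x y : S, x ≠ y → ∃! B, B ∈ LS ∧ x ∈ B ∧ y ∈ B)
    (hbT : ∀ B ∈ LT, 2 ≤ B.ncard)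
    (hpT : ∀ x y : T, x ≠ y → ∃! B, B ∈ LT ∧ x ∈ B ∧ y ∈ B)
    (f : S → Option T)
    (hf : IsOpenSet LS (pDom f) ∧
      ∀ F : Set T, Subsys LT F → Subsys LS (pWinv f F)) :
    -- the co-domain is a subsystem,
    Subsys LS (pDom f)ᶜ ∧
    -- so is D ∪ f⁻¹(y) for every y,
    (∀ y : T, Subsys LS ((pDom f)ᶜ ∪ {x | f x = some y})) ∧
    -- and each nonempty fibre of a block is a group divisible design:
    (∀ B ∈ LT, (pPre f B).Nonempty →
      let Z : Set S := pPre f B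
      let G : Set (Set S) :=
        {g | ∃ y, y ∈ B ∧ y ∈ pIm f ∧ g = {x | f x = some y}}
      let L₀ : Set (Set S) :=
        {b | b ∈ LS ∧ b ⊆ Z ∧ ∀ g ∈ G, (b ∩ g).ncard ≤ 1}
      -- the groups partition Z,
      (∀ z ∈ Z, ∃! g, g ∈ G ∧ z ∈ g) ∧
      -- and every pair of distinct points of Z lies in exactly one group or
      -- exactly one block of L₀, but not both.
      ∀ x₁ ∈ Z, ∀ x₂ ∈ Z, x₁ ≠ x₂ →
        ((∃! g, g ∈ G ∧ x₁ ∈ g ∧ x₂ ∈ g) ∧ ¬∃ b ∈ L₀, x₁ ∈ b ∧ x₂ ∈ b) ∨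
        ((∃! b, b ∈ L₀ ∧ x₁ ∈ b ∧ x₂ ∈ b) ∧ ¬∃ g ∈ G, x₁ ∈ g ∧ x₂ ∈ g)) :=
  stmt13_general LS LT hpS hpT f hf
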